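/- For any trajectory of the generalized counter with parameters N and l started at time 0 (so that mode(0) = switch), the state at time N satisfies α(s(N)) = α(s(0)) + 1 modulo (2^l)^N. -/

import Mathlib

/-!
After `N` steps the register has come full circle, so cell `i` holds its initial content,
passed once through `Γ(·, mode i)`. The mode stays `switch` exactly as long as the cells read so
far are all ones, so the register adds `1` to the base-`2^l` numeral `α` with carry propagation:
cells of all ones become zero, the first other cell is incremented, and the rest are untouched.
-/

/-- The two modes of the counter. -/
inductive Mode : Type
  | rotate : Mode
  | switch : Mode
deriving DecidableEq

/-- `β(x) = x^1·2^0 + x^2·2^1 + ⋯ + x^l·2^(l-1)` (0-indexed: bit `j` has weight `2^j`). -/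
def beta {l : ℕ} (x : Fin l → Bool) : ℕ :=
  ∑ j : Fin l, (x j).toNat * 2 ^ (j : ℕ)

/-- Binary increment modulo `2^l`: the unique `y : {0,1}^l` with
`β(y) = β(x) + 1 mod 2^l`. -/
def binInc {l : ℕ} (x : Fin l → Bool) : Fin l → Bool :=
  fun j => ((beta x + 1) % 2 ^ l).testBit (j : ℕ)

/-- `α(s) = β(s_1)·(2^l)^0 + β(s_2)·(2^l)^1 + ⋯ + β(s_N)·(2^l)^(N-1)`. -/
def alphaGen {N l : ℕ} (s : Fin N → Fin l → Bool) : ℕ :=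
  ∑ i : Fin N, beta (s i) * (2 ^ l) ^ (i : ℕ)

theorem sum_digits_increment_modEq {B : ℕ} :
    ∀ {n : ℕ} (d e : Fin n → ℕ), (∀ i, d i < B) →
      (∀ i, e i = if ∀ j < i, d j = B - 1 then (d i + 1) % B else d i) →
      ∑ i, e i * B ^ (i : ℕ) ≡ ∑ i, d i * B ^ (i : ℕ) + 1 [MOD B ^ n]
  | 0, _, _, _, _ => by simp [Nat.modEq_one]
  | n + 1, d, e, hd, he => by
    have sum_succ : ∀ f : Fin (n + 1) → ℕ,
        ∑ i, f i * B ^ (i : ℕ) = f 0 + B * ∑ i : Fin n, f i.succ * B ^ (i : ℕ) := by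
      intro f
      simp only [Fin.sum_univ_succ, Finset.mul_sum, Fin.val_zero, Fin.val_succ, pow_succ']
      ring_nf
    have hB : 0 < B := (Nat.zero_le _).trans_lt (hd 0)
    rw [sum_succ d, sum_succ e, pow_succ']
    by_cases h0 : d 0 = B - 1
    · have he0 : e 0 = 0 := by
        rw [he, if_pos (fun j hj => absurd hj (Fin.not_lt_zero j)), h0, Nat.sub_add_cancel hB,
          Nat.mod_self]
      have ih := sum_digits_increment_modEq (fun i => d i.succ) (fun i => e i.succ)
        (fun i => hd i.succ) fun i => by simp [he i.succ, Fin.forall_fin_succ, h0]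
      calc e 0 + B * ∑ i : Fin n, e i.succ * B ^ (i : ℕ)
          ≡ B * (∑ i : Fin n, d i.succ * B ^ (i : ℕ) + 1) [MOD B * B ^ n] := by
            rw [he0, zero_add]; exact ih.mul_left' B
        _ = d 0 + B * ∑ i : Fin n, d i.succ * B ^ (i : ℕ) + 1 := by
            rw [h0, mul_add_one]; omega
    · have he0 : e 0 = d 0 + 1 := by
        rw [he, if_pos (fun j hj => absurd hj (Fin.not_lt_zero j))]
        exact Nat.mod_eq_of_lt (by have := hd 0; omega)
      have he_succ : ∀ i : Fin n, e i.succ = d i.succ := fun i => by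
        rw [he, if_neg fun h => h0 (h 0 i.succ_pos)]
      simp only [he0, he_succ, add_right_comm]
      rfl

section Beta

variable {l : ℕ}

theorem beta_testBit (m : ℕ) : beta (fun j : Fin l => m.testBit j) = m % 2 ^ l := by
  induction l with
  | zero => simp [beta, Nat.mod_one]
  | succ l ih =>
    rw [beta, Fin.sum_univ_castSucc, Nat.mod_pow_succ, Nat.toNat_testBit]
    simp only [Fin.val_castSucc, Fin.val_last]
    rw [← beta, ih, mul_comm]

theorem beta_binInc (x : Fin l → Bool) : beta (binInc x) = (beta x + 1) % 2 ^ l :=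
  (beta_testBit _).trans (Nat.mod_mod _ _)

theorem beta_true : beta (fun _ : Fin l => true) = 2 ^ l - 1 := by
  simpa [Nat.two_pow_pred_mod_two_pow] using beta_testBit (l := l) (2 ^ l - 1)

theorem beta_le_beta_true (x : Fin l → Bool) : beta x ≤ beta (fun _ : Fin l => true) :=
  Finset.sum_le_sum fun _ _ => Nat.mul_le_mul_right _ (Bool.toNat_le _)

theorem beta_lt_beta_true {x : Fin l → Bool} (hx : x ≠ fun _ => true) :
    beta x < beta (fun _ : Fin l => true) := by
  obtain ⟨j, hj⟩ : ∃ j, x j = false := by simpa [funext_iff] using hx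
  refine Finset.sum_lt_sum (fun j _ => Nat.mul_le_mul_right _ (Bool.toNat_le _))
    ⟨j, Finset.mem_univ j, ?_⟩
  simp [hj]

theorem beta_lt (x : Fin l → Bool) : beta x < 2 ^ l :=
  (beta_le_beta_true x).trans_lt (beta_true ▸ Nat.sub_lt (Nat.two_pow_pos l) one_pos)

theorem beta_eq_two_pow_sub_one_iff {x : Fin l → Bool} : beta x = 2 ^ l - 1 ↔ x = fun _ => true :=
  ⟨fun h => by_contra fun hx => (beta_lt_beta_true hx).ne (h.trans beta_true.symm),
    fun h => h ▸ beta_true⟩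

end Beta

theorem alphaGen_modEq_of_carry {N l : ℕ} (x y : Fin N → Fin l → Bool)
    (hy : ∀ i, y i = if ∀ j < i, x j = (fun _ => true) then binInc (x i) else x i) :
    alphaGen y ≡ alphaGen x + 1 [MOD (2 ^ l) ^ N] :=
  sum_digits_increment_modEq (fun i => beta (x i)) (fun i => beta (y i)) (fun i => beta_lt _)
    fun i => by simp only [hy i, beta_eq_two_pow_sub_one_iff, apply_ite beta, beta_binInc]

def IsShiftRegister {α : Type*} {N : ℕ} (s : ℕ → Fin N → α) : Prop :=
  ∀ (t : ℕ) (i : Fin N) (h : (i : ℕ) + 1 < N), s (t + 1) i = s t ⟨(i : ℕ) + 1, h⟩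

namespace IsShiftRegister

variable {α : Type*} {N : ℕ} {s : ℕ → Fin N → α}

theorem apply_add (hs : IsShiftRegister s) (t d : ℕ) (i : Fin N) (h : (i : ℕ) + d < N) :
    s (t + d) i = s t ⟨(i : ℕ) + d, h⟩ := by
  induction d generalizing i with
  | zero => rfl
  | succ d ih =>
    rw [← add_assoc, hs _ i (by omega), ih _ (by simp only; omega)]
    congr 2
    simp only
    omega

theorem head (hs : IsShiftRegister s) (hN : 0 < N) (t : ℕ) (h : t < N) :
    s t ⟨0, hN⟩ = s 0 ⟨t, h⟩ := by
  simpa using hs.apply_add 0 t ⟨0, hN⟩ (by simpa)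

theorem eq_feedback (hs : IsShiftRegister s) (hN : 0 < N) (g : ℕ → α → α)
    (hlast : ∀ t, s (t + 1) ⟨N - 1, Nat.sub_lt hN one_pos⟩ = g t (s t ⟨0, hN⟩)) (i : Fin N) :
    s N i = g i (s 0 i) := by
  have hi : (i : ℕ) + (N - 1 - i) < N := by omega
  calc s N i = s (i + 1 + (N - 1 - i)) i := by congr 1; omega
    _ = s (i + 1) ⟨N - 1, Nat.sub_lt hN one_pos⟩ := by rw [hs.apply_add _ _ i hi]; congr 2; omega
    _ = g i (s 0 i) := by rw [hlast, hs.head hN i i.isLt]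

end IsShiftRegister

theorem mode_eq_switch_iff {n : ℕ} {mode : ℕ → Mode} {p : Fin n → Prop} [DecidablePred p]
    (h0 : mode 0 = .switch)
    (hstep : ∀ (t : ℕ) (h : t + 1 < n), mode (t + 1) = if p ⟨t, by omega⟩ then mode t else .rotate)
    (i : Fin n) : mode i = .switch ↔ ∀ j < i, p j := by
  obtain ⟨i, hi⟩ := i
  induction i with
  | zero => exact iff_of_true h0 fun j hj => absurd hj (by simp [Fin.lt_def])
  | succ i ih =>
    have hlt : ∀ j : Fin n, j < ⟨i + 1, hi⟩ ↔ j < ⟨i, by omega⟩ ∨ j = ⟨i, by omega⟩ := by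
      simp [Fin.lt_def, Fin.ext_iff]; omega
    rw [hstep i hi]
    split_ifs with hp
    · rw [ih (by omega)]
      simp only [hlt, or_imp, forall_and, forall_eq, hp, and_true]
    · simp only [false_iff]
      exact fun h => hp (h _ ((hlt _).2 (Or.inr rfl)))

-- Coordinate `i` is `s_{i+1}` of the paper.
/-- After `N` steps of the generalized counter with parameters `N` and `l`
(started at time `0`, so that `mode 0 = switch`), the encoded number `α`
has increased by `1` modulo `(2^l)^N`.  Coordinates are `0`-indexed:
coordinate `i` corresponds to `s_{i+1}` of the paper. -/
theorem stmt3 (N l : ℕ) (hN : 0 < N)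
    (s : ℕ → Fin N → Fin l → Bool) (mode : ℕ → Mode)
    -- s_i(t) = s_{i+1}(t-1) for i = 1, ..., N-1
    (hshift : ∀ (t : ℕ) (i : Fin N) (h : (i : ℕ) + 1 < N),
      s (t + 1) i = s t ⟨(i : ℕ) + 1, h⟩)
    -- s_N(t) = Γ(s_1(t-1), mode(t-1)); Γ(x, rotate) = x, Γ(x, switch) = increment mod 2^l
    (hlast : ∀ t : ℕ, s (t + 1) ⟨N - 1, Nat.sub_lt hN one_pos⟩ =
      (if mode t = Mode.switch then binInc (s t ⟨0, hN⟩) else s t ⟨0, hN⟩))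
    -- mode(t) = switch whenever t is a multiple of N
    (hmodeN : ∀ t : ℕ, N ∣ t → mode t = Mode.switch)
    -- otherwise mode(t) = mode(t-1) if s_1(t-1) = (1,…,1), and mode(t) = rotate otherwise
    (hmode : ∀ t : ℕ, ¬ N ∣ (t + 1) →
      mode (t + 1) =
        (if s t ⟨0, hN⟩ = (fun _ => true) then mode t else Mode.rotate)) :
    alphaGen (s N) % (2 ^ l) ^ N = (alphaGen (s 0) + 1) % (2 ^ l) ^ N := by
  have hstate : ∀ i : Fin N, s N i = if mode i = .switch then binInc (s 0 i) else s 0 i :=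
    IsShiftRegister.eq_feedback hshift hN
      (fun t x => if mode t = .switch then binInc x else x) hlast
  have hswitch : ∀ i : Fin N, mode i = .switch ↔ ∀ j < i, s 0 j = fun _ => true :=
    mode_eq_switch_iff (hmodeN 0 (dvd_zero N)) fun t ht => by
      rw [hmode t (Nat.not_dvd_of_pos_of_lt t.succ_pos ht),
        IsShiftRegister.head hshift hN t (by omega)]
  exact alphaGen_modEq_of_carry (s 0) (s N) fun i => by simp only [hstate, hswitch]
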